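/- Let K ≥ 2 be an integer and a_1, …, a_K > 0 real numbers. Then the integral over the open simplex {p ∈ ℝ^{K−1} : p_k > 0 for all k and Σ_{k=1}^{K−1} p_k < 1} of the function p ↦ ∏_{k=1}^{K−1} p_k^{a_k−1} · (1 − Σ_{k=1}^{K−1} p_k)^{a_K−1}, with respect to Lebesgue measure on ℝ^{K−1}, equals B(a) = ∏_{k=1}^K Γ(a_k) / Γ(Σ_{k=1}^K a_k). In particular, the Dirichlet density with parameter a integrates to 1 over the simplex. -/

import Mathlib

/-!
Integrate out the last coordinate `t` of a point `(q, t)` of the simplex. For fixed `q`, with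
`s = 1 - ∑ q`, the factor `t ^ (β - 1) * (s - t) ^ (c - 1)` integrates over `(0, s)` to
`s ^ (β + c - 1) * B(β, c)` (substitute `t = s x`), so the kernel with exponents `(b, β; c)`
becomes the kernel with exponents `(b; β + c)` times `B(β, c)`. By induction on the dimension,
`Γ(β + c)` cancels at each step and the multivariate Beta function remains. Working with
`lintegral` postpones all integrability questions to the very end.
-/

open MeasureTheory Real Set
open scoped ENNReal
open ProbabilityTheory (beta beta_pos lintegral_betaPDF lintegral_betaPDF_eq_one)

def openSimplex (n : ℕ) : Set (Fin n → ℝ) := {p | (∀ i, 0 < p i) ∧ ∑ i, p i < 1}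

lemma measurableSet_openSimplex (n : ℕ) : MeasurableSet (openSimplex n) := by
  simp only [openSimplex, ofPred_and, ofPred_forall]
  exact (MeasurableSet.iInter fun i =>
      measurableSet_lt measurable_const (measurable_pi_apply i)).inter
    (measurableSet_lt (by fun_prop) measurable_const)

lemma snoc_mem_openSimplex_iff {n : ℕ} (q : Fin n → ℝ) (t : ℝ) :
    Fin.snoc q t ∈ openSimplex (n + 1) ↔ q ∈ openSimplex n ∧ t ∈ Ioo 0 (1 - ∑ i, q i) := by
  simp only [openSimplex, mem_ofPred_eq, Fin.forall_fin_succ', Fin.snoc_castSucc, Fin.snoc_last,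
    Fin.sum_snoc, mem_Ioo]
  constructor
  · rintro ⟨⟨hq, ht⟩, hsum⟩
    exact ⟨⟨hq, by linarith⟩, ht, by linarith⟩
  · rintro ⟨⟨hq, -⟩, ht, hsum⟩
    exact ⟨⟨hq, ht⟩, by linarith⟩

lemma lintegral_eq_lintegral_lintegral_snoc {α : Type*} [MeasureSpace α]
    [SigmaFinite (volume : Measure α)] {n : ℕ} (f : (Fin (n + 1) → α) → ℝ≥0∞) (hf : Measurable f) :
    ∫⁻ p, f p = ∫⁻ q : Fin n → α, ∫⁻ t, f (Fin.snoc q t) := by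
  set e := (MeasurableEquiv.piFinSuccAbove (fun _ : Fin (n + 1) => α) (Fin.last n)).symm
  rw [← (volume_preserving_piFinSuccAbove _ (Fin.last n)).symm.lintegral_comp_emb
      e.measurableEmbedding, Measure.volume_eq_prod,
    lintegral_prod_symm' (fun a => f (e a)) (hf.comp e.measurable)]
  simp [e, MeasurableEquiv.piFinSuccAbove_symm_apply, Fin.insertNthEquiv, Fin.insertNth_last']

lemma setLIntegral_openSimplex_succ {n : ℕ} (f : (Fin (n + 1) → ℝ) → ℝ≥0∞) (hf : Measurable f) :
    ∫⁻ p in openSimplex (n + 1), f p =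
      ∫⁻ q in openSimplex n, ∫⁻ t in Ioo 0 (1 - ∑ i, q i), f (Fin.snoc q t) := by
  rw [← lintegral_indicator (measurableSet_openSimplex _),
    lintegral_eq_lintegral_lintegral_snoc _ (hf.indicator (measurableSet_openSimplex _)),
    ← lintegral_indicator (measurableSet_openSimplex _)]
  congr 1 with q
  by_cases hq : q ∈ openSimplex n
  · rw [indicator_of_mem hq, ← lintegral_indicator measurableSet_Ioo]
    congr 1 with t
    simp only [indicator, snoc_mem_openSimplex_iff, hq, true_and]
  · rw [indicator_of_notMem hq]
    simp [indicator, snoc_mem_openSimplex_iff, hq]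

lemma lintegral_Ioo_rpow_mul_one_sub_rpow {u v : ℝ} (hu : 0 < u) (hv : 0 < v) :
    ∫⁻ x in Ioo 0 1, ENNReal.ofReal (x ^ (u - 1) * (1 - x) ^ (v - 1)) =
      ENNReal.ofReal (beta u v) := by
  have hB := beta_pos hu hv
  have h := lintegral_betaPDF_eq_one hu hv
  simp_rw [lintegral_betaPDF, mul_assoc,
    ENNReal.ofReal_mul (one_div_pos.2 hB).le] at h
  rw [lintegral_const_mul _ (by fun_prop), one_div, ENNReal.ofReal_inv_of_pos hB] at h
  simpa using ENNReal.eq_inv_of_mul_eq_one_left ((mul_comm _ _).trans h)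

lemma lintegral_Ioo_rpow_mul_sub_rpow {u v s : ℝ} (hu : 0 < u) (hv : 0 < v) (hs : 0 < s) :
    ∫⁻ t in Ioo 0 s, ENNReal.ofReal (t ^ (u - 1) * (s - t) ^ (v - 1)) =
      ENNReal.ofReal (s ^ (u + v - 1) * beta u v) := by
  have hscale : s ^ (u + v - 1) = s * (s ^ (u - 1) * s ^ (v - 1)) := by
    rw [show u + v - 1 = 1 + ((u - 1) + (v - 1)) by ring, rpow_add hs, rpow_add hs, rpow_one]
  have hsubst := lintegral_image_eq_lintegral_abs_deriv_mul measurableSet_Ioo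
    (f := (s * ·)) (f' := fun _ => s)
    (fun x _ => by simpa using ((hasDerivAt_id x).const_mul s).hasDerivWithinAt)
    (mul_right_injective₀ hs.ne').injOn
    (fun t => ENNReal.ofReal (t ^ (u - 1) * (s - t) ^ (v - 1))) (s := Ioo (0 : ℝ) 1)
  rw [image_mul_left_Ioo hs, mul_zero, mul_one] at hsubst
  rw [hsubst, ENNReal.ofReal_mul (by positivity), ← lintegral_Ioo_rpow_mul_one_sub_rpow hu hv,
    ← lintegral_const_mul _ (by fun_prop)]
  refine setLIntegral_congr_fun measurableSet_Ioo fun x hx => ?_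
  rw [abs_of_pos hs, ← ENNReal.ofReal_mul hs.le, ← ENNReal.ofReal_mul (by positivity),
    hscale, show s - s * x = s * (1 - x) by ring, mul_rpow hs.le hx.1.le,
    mul_rpow hs.le (by linarith [hx.2])]
  ring_nf

noncomputable def dirichletKernel {n : ℕ} (b : Fin n → ℝ) (c : ℝ) (p : Fin n → ℝ) : ℝ :=
  (∏ i, p i ^ (b i - 1)) * (1 - ∑ i, p i) ^ (c - 1)

noncomputable def multiBeta {n : ℕ} (a : Fin n → ℝ) : ℝ := (∏ k, Gamma (a k)) / Gamma (∑ k, a k)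

lemma measurable_dirichletKernel {n : ℕ} (b : Fin n → ℝ) (c : ℝ) :
    Measurable (dirichletKernel b c) := by
  unfold dirichletKernel; fun_prop

lemma dirichletKernel_nonneg {n : ℕ} (b : Fin n → ℝ) (c : ℝ) {p : Fin n → ℝ}
    (hp : p ∈ openSimplex n) : 0 ≤ dirichletKernel b c p :=
  mul_nonneg (Finset.prod_nonneg fun i _ => rpow_nonneg (hp.1 i).le _)
    (rpow_nonneg (by linarith [hp.2]) _)

lemma dirichletKernel_snoc {n : ℕ} (b : Fin n → ℝ) (β c : ℝ) (q : Fin n → ℝ) (t : ℝ) :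
    dirichletKernel (Fin.snoc b β) c (Fin.snoc q t) =
      (∏ i, q i ^ (b i - 1)) * (t ^ (β - 1) * ((1 - ∑ i, q i) - t) ^ (c - 1)) := by
  simp only [dirichletKernel, Fin.prod_univ_castSucc, Fin.snoc_castSucc, Fin.snoc_last,
    Fin.sum_snoc]
  ring_nf

lemma multiBeta_nonneg {n : ℕ} {a : Fin n → ℝ} (ha : ∀ k, 0 ≤ a k) : 0 ≤ multiBeta a :=
  div_nonneg (Finset.prod_nonneg fun k _ => Gamma_nonneg_of_nonneg (ha k))
    (Gamma_nonneg_of_nonneg (Finset.sum_nonneg fun k _ => ha k))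

lemma multiBeta_snoc_snoc {n : ℕ} (b : Fin n → ℝ) {β c : ℝ} (hβ : 0 < β) (hc : 0 < c) :
    multiBeta (Fin.snoc (Fin.snoc b β) c) =
      multiBeta (Fin.snoc b (β + c)) * beta β c := by
  have : Gamma (β + c) ≠ 0 := (Gamma_pos_of_pos (add_pos hβ hc)).ne'
  simp only [multiBeta, beta, Fin.prod_univ_castSucc, Fin.snoc_castSucc,
    Fin.snoc_last, Fin.sum_snoc, add_assoc]
  field_simp

lemma lintegral_dirichletKernel_snoc {n : ℕ} (b : Fin n → ℝ) {β c : ℝ} (hβ : 0 < β) (hc : 0 < c)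
    {q : Fin n → ℝ} (hq : q ∈ openSimplex n) :
    ∫⁻ t in Ioo 0 (1 - ∑ i, q i), ENNReal.ofReal (dirichletKernel (Fin.snoc b β) c (Fin.snoc q t)) =
      ENNReal.ofReal (dirichletKernel b (β + c) q) *
        ENNReal.ofReal (beta β c) := by
  have hprod : 0 ≤ ∏ i, q i ^ (b i - 1) := Finset.prod_nonneg fun i _ => rpow_nonneg (hq.1 i).le _
  simp_rw [dirichletKernel_snoc, ENNReal.ofReal_mul hprod]
  rw [lintegral_const_mul _ (by fun_prop),
    lintegral_Ioo_rpow_mul_sub_rpow hβ hc (by linarith [hq.2]), ← ENNReal.ofReal_mul hprod,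
    ← ENNReal.ofReal_mul (dirichletKernel_nonneg b (β + c) hq), dirichletKernel, mul_assoc]

lemma lintegral_dirichletKernel {n : ℕ} (b : Fin n → ℝ) (c : ℝ) (hb : ∀ i, 0 < b i)
    (hc : 0 < c) :
    ∫⁻ p in openSimplex n, ENNReal.ofReal (dirichletKernel b c p) =
      ENNReal.ofReal (multiBeta (Fin.snoc b c)) := by
  induction n generalizing c with
  | zero =>
    have : openSimplex 0 = univ := by ext p; simp [openSimplex]
    have hlast : Fin.snoc (α := fun _ => ℝ) b c 0 = c := by simp [Fin.snoc]
    simp [this, dirichletKernel, multiBeta, hlast, (Gamma_pos_of_pos hc).ne', volume_pi]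
  | succ n ih =>
    obtain ⟨b, β, rfl⟩ : ∃ b' β, b = Fin.snoc b' β :=
      ⟨Fin.init b, b (Fin.last n), (Fin.snoc_init_self b).symm⟩
    have hb' (i : Fin n) : 0 < b i := by simpa using hb i.castSucc
    have hβ : 0 < β := by simpa using hb (Fin.last n)
    calc ∫⁻ p in openSimplex (n + 1), ENNReal.ofReal (dirichletKernel (Fin.snoc b β) c p)
        = ∫⁻ q in openSimplex n, ENNReal.ofReal (dirichletKernel b (β + c) q) *
            ENNReal.ofReal (beta β c) := by
          rw [setLIntegral_openSimplex_succ _ (measurable_dirichletKernel _ c).ennreal_ofReal]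
          exact setLIntegral_congr_fun (measurableSet_openSimplex n) fun q hq =>
            lintegral_dirichletKernel_snoc b hβ hc hq
      _ = ENNReal.ofReal (multiBeta (Fin.snoc b (β + c))) *
            ENNReal.ofReal (beta β c) := by
          rw [lintegral_mul_const _ (measurable_dirichletKernel b _).ennreal_ofReal,
            ih b (β + c) hb' (add_pos hβ hc)]
      _ = ENNReal.ofReal (multiBeta (Fin.snoc (Fin.snoc b β) c)) := by
          rw [← ENNReal.ofReal_mul' (beta_pos hβ hc).le,
            multiBeta_snoc_snoc b hβ hc]

lemma integral_dirichletKernel {n : ℕ} (a : Fin (n + 1) → ℝ) (ha : ∀ k, 0 < a k) :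
    ∫ p in openSimplex n, dirichletKernel (Fin.init a) (a (Fin.last n)) p = multiBeta a := by
  have hlint := lintegral_dirichletKernel (Fin.init a) (a (Fin.last n)) (fun i => ha _) (ha _)
  rw [Fin.snoc_init_self] at hlint
  rw [integral_eq_lintegral_of_nonneg_ae _ (measurable_dirichletKernel _ _).aestronglyMeasurable,
    hlint, ENNReal.toReal_ofReal (multiBeta_nonneg fun k => (ha k).le)]
  exact (ae_restrict_mem (measurableSet_openSimplex n)).mono fun p hp =>
    dirichletKernel_nonneg _ _ hp

/-- The Dirichlet density kernel integrates over the open simplex in `ℝ^(K-1)` to the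
multivariate Beta function `B(a) = (∏ k, Γ(a k)) / Γ(∑ k, a k)`. -/
theorem integral_dirichlet_kernel (K : ℕ) (hK : 2 ≤ K) (a : Fin K → ℝ) (ha : ∀ k, 0 < a k) :
    ∫ p in {p : Fin (K - 1) → ℝ | (∀ i, 0 < p i) ∧ ∑ i, p i < 1},
        (∏ i : Fin (K - 1), p i ^ (a (Fin.castLE (Nat.sub_le K 1) i) - 1)) *
          (1 - ∑ i, p i) ^ (a ⟨K - 1, by omega⟩ - 1) =
      (∏ k, Real.Gamma (a k)) / Real.Gamma (∑ k, a k) := by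
  obtain ⟨n, rfl⟩ : ∃ n, K = n + 1 := ⟨K - 1, by omega⟩
  -- the two sides agree with those of `integral_dirichletKernel a ha` up to unfolding definitions
  exact integral_dirichletKernel a ha
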